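/- Let μ be a probability measure on ℝ^d, let t > 0, let R > 0 be such that a := μ({z : ‖z‖ ≤ R}) > 0, and let φ_t be the density of N(0, tI_d). Define D(x) = ∫ φ_t(x−z) dμ(z). Then for all x, z ∈ ℝ^d with ‖z‖ > 4(‖x‖ + R), one has φ_t(x−z) ≤ a⁻¹ · exp(−‖z‖²/(4t)) · D(x). -/

import Mathlib

open MeasureTheory

/-- The density of the Gaussian distribution `N(0, t I_d)` on `ℝ^d`. -/
noncomputable def gaussDensity (d : ℕ) (t : ℝ) (u : EuclideanSpace ℝ (Fin d)) : ℝ :=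
  (2 * Real.pi * t) ^ (-(d : ℝ) / 2) * Real.exp (-‖u‖ ^ 2 / (2 * t))

/-! For `‖y‖ ≤ R` and `‖z‖ ≥ 4(‖x‖ + R)` one has `‖x - z‖² ≥ ‖x - y‖² + ‖z‖²/2`, hence
`φ_t(x - z) ≤ exp(-‖z‖²/(4t)) φ_t(x - y)`. Averaging this over the ball `‖y‖ ≤ R`, which has
mass `a`, bounds `a φ_t(x - z)` by `exp(-‖z‖²/(4t)) D(x)`. -/

lemma measureReal_mul_le_integral {α : Type*} [MeasurableSpace α] {μ : Measure α}
    [IsFiniteMeasure μ] {f : α → ℝ} {s : Set α} {c : ℝ} (hs : MeasurableSet s)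
    (hf : Integrable f μ) (hf_nonneg : 0 ≤ᵐ[μ] f) (hc : ∀ y ∈ s, c ≤ f y) :
    μ.real s * c ≤ ∫ y, f y ∂μ :=
  calc μ.real s * c = c * μ.real s := mul_comm _ _
    _ ≤ ∫ y in s, f y ∂μ :=
      setIntegral_ge_of_const_le_real hs (measure_ne_top μ s) hc hf.integrableOn
    _ ≤ ∫ y, f y ∂μ := setIntegral_le_integral hf hf_nonneg

lemma sq_norm_sub_add_half_sq_le {E : Type*} [SeminormedAddCommGroup E] {x y z : E} {R : ℝ}
    (hy : ‖y‖ ≤ R) (hz : 4 * (‖x‖ + R) ≤ ‖z‖) :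
    ‖x - y‖ ^ 2 + ‖z‖ ^ 2 / 2 ≤ ‖x - z‖ ^ 2 := by
  have hxy : ‖x - y‖ ≤ ‖z‖ / 4 := (norm_sub_le x y).trans (by linarith)
  have hxz : 3 * ‖z‖ / 4 ≤ ‖x - z‖ := by
    have := norm_sub_norm_le z x
    rw [norm_sub_rev] at this
    linarith [(norm_nonneg y).trans hy]
  have hxy2 := pow_le_pow_left₀ (norm_nonneg _) hxy 2
  have hxz2 := pow_le_pow_left₀ (by linarith [norm_nonneg (x - y)]) hxz 2
  linarith

namespace gaussDensity

variable {d : ℕ} {t : ℝ}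

lemma nonneg (ht : 0 ≤ t) (u : EuclideanSpace ℝ (Fin d)) : 0 ≤ gaussDensity d t u := by
  unfold gaussDensity
  positivity

lemma le_normalization (ht : 0 ≤ t) (u : EuclideanSpace ℝ (Fin d)) :
    gaussDensity d t u ≤ (2 * Real.pi * t) ^ (-(d : ℝ) / 2) := by
  have hexp : Real.exp (-‖u‖ ^ 2 / (2 * t)) ≤ 1 :=
    Real.exp_le_one_iff.mpr <|
      div_nonpos_of_nonpos_of_nonneg (neg_nonpos.mpr (by positivity)) (by positivity)
  exact mul_le_of_le_one_right (by positivity) hexp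

@[fun_prop]
lemma continuous : Continuous (gaussDensity d t) := by
  unfold gaussDensity
  fun_prop

lemma integrable_comp_sub (ht : 0 ≤ t) (μ : Measure (EuclideanSpace ℝ (Fin d)))
    [IsFiniteMeasure μ] (x : EuclideanSpace ℝ (Fin d)) :
    Integrable (fun y => gaussDensity d t (x - y)) μ := by
  refine .of_bound (by fun_prop) ((2 * Real.pi * t) ^ (-(d : ℝ) / 2))
    (.of_forall fun y => ?_)
  rw [Real.norm_of_nonneg (nonneg ht _)]
  exact le_normalization ht _

lemma le_exp_mul_of_sq_norm_add_le (ht : 0 < t) {u v : EuclideanSpace ℝ (Fin d)} {s : ℝ}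
    (h : ‖u‖ ^ 2 + s ≤ ‖v‖ ^ 2) :
    gaussDensity d t v ≤ Real.exp (-s / (2 * t)) * gaussDensity d t u := by
  unfold gaussDensity
  rw [mul_left_comm, ← Real.exp_add]
  gcongr
  rw [← add_div, ← neg_add, neg_div, neg_div, neg_le_neg_iff]
  gcongr
  linarith

end gaussDensity

theorem stmt6_general (d : ℕ) (μ : Measure (EuclideanSpace ℝ (Fin d))) [IsProbabilityMeasure μ]
    (t : ℝ) (ht : 0 < t) (R : ℝ)
    (a : ℝ) (ha_def : a = (μ {z | ‖z‖ ≤ R}).toReal) (ha : 0 < a)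
    (D : EuclideanSpace ℝ (Fin d) → ℝ)
    (hD : D = fun x => ∫ z, gaussDensity d t (x - z) ∂μ) :
    ∀ x z : EuclideanSpace ℝ (Fin d), ‖z‖ > 4 * (‖x‖ + R) →
      gaussDensity d t (x - z) ≤ a⁻¹ * Real.exp (-‖z‖ ^ 2 / (4 * t)) * D x := by
  intro x z hz
  have hball : ∀ y ∈ {y : EuclideanSpace ℝ (Fin d) | ‖y‖ ≤ R},
      gaussDensity d t (x - z) ≤ Real.exp (-‖z‖ ^ 2 / (4 * t)) * gaussDensity d t (x - y) := by
    intro y hy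
    have := gaussDensity.le_exp_mul_of_sq_norm_add_le ht
      (sq_norm_sub_add_half_sq_le (x := x) hy hz.le)
    rwa [neg_div, div_div, show 2 * (2 * t) = 4 * t by ring, ← neg_div] at this
  have hmass := measureReal_mul_le_integral
    (measurableSet_le (by fun_prop) measurable_const)
    ((gaussDensity.integrable_comp_sub ht.le μ x).const_mul _)
    (.of_forall fun y => mul_nonneg (Real.exp_pos _).le (gaussDensity.nonneg ht.le _)) hball
  rw [integral_const_mul, measureReal_def, ← ha_def] at hmass
  rw [mul_assoc, le_inv_mul_iff₀ ha, hD]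
  exact hmass

/-- far-field bound: for a probability measure `μ` on `ℝ^d`, `t > 0`,
and `R > 0` with `a := μ({‖z‖ ≤ R}) > 0`, the heat-kernel smoothing
`D(x) = ∫ φ_t(x−z) dμ(z)` satisfies, for all `x, z` with `‖z‖ > 4(‖x‖ + R)`,
`φ_t(x−z) ≤ a⁻¹ exp(−‖z‖²/(4t)) D(x)`. -/
theorem stmt6 (d : ℕ) (μ : Measure (EuclideanSpace ℝ (Fin d))) [IsProbabilityMeasure μ]
    (t : ℝ) (ht : 0 < t) (R : ℝ) (hR : 0 < R)
    (a : ℝ) (ha_def : a = (μ {z | ‖z‖ ≤ R}).toReal) (ha : 0 < a)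
    (D : EuclideanSpace ℝ (Fin d) → ℝ)
    (hD : D = fun x => ∫ z, gaussDensity d t (x - z) ∂μ) :
    ∀ x z : EuclideanSpace ℝ (Fin d), ‖z‖ > 4 * (‖x‖ + R) →
      gaussDensity d t (x - z) ≤ a⁻¹ * Real.exp (-‖z‖ ^ 2 / (4 * t)) * D x :=
  stmt6_general d μ t ht R a ha_def ha D hD
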